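/- Let (S_t)_{t>0} and (T_t)_{t>0} be two positivity preserving bounded C₀-semigroups on 𝔊₁^sa with generators −H and −L respectively, and suppose in addition that D(H) ⊆ D(L). Then S_t ≤ T_t for all t > 0 if and only if the operator H − L (with domain D(H)) is positivity preserving. -/

import Mathlib

open scoped ComplexOrder
open Filter Topology

noncomputable section

namespace KatoReg

variable {H : Type*} [NormedAddCommGroup H] [InnerProductSpace ℂ H] [CompleteSpace H]

/-- `u ≥ 0` : `(u x, x) ≥ 0` for all `x ∈ H`. -/
def PosOp (u : H →L[ℂ] H) : Prop := ∀ x : H, 0 ≤ (inner ℂ x (u x) : ℂ)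

/-- The rank-one operator `z ↦ ⟪y, z⟫ • x`. -/
def rankOne (x y : H) : H →L[ℂ] H :=
  (ContinuousLinearMap.toSpanSingleton ℂ x).comp (innerSL ℂ y)

/-- A bounded operator is trace class (nuclear) if it is an absolutely convergent sum
of rank-one operators built from vectors in the closed unit ball. -/
def IsTraceClass (u : H →L[ℂ] H) : Prop :=
  ∃ (c : ℕ → ℝ) (e f : ℕ → H), (∀ n, 0 ≤ c n) ∧ (∀ n, ‖e n‖ ≤ 1) ∧ (∀ n, ‖f n‖ ≤ 1)
    ∧ Summable c ∧ HasSum (fun n => c n • rankOne (e n) (f n)) u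

/-- The trace norm `‖u‖₁`. -/
def traceNorm (u : H →L[ℂ] H) : ℝ :=
  sInf { s : ℝ | ∃ (c : ℕ → ℝ) (e f : ℕ → H), (∀ n, 0 ≤ c n) ∧ (∀ n, ‖e n‖ ≤ 1) ∧
    (∀ n, ‖f n‖ ≤ 1) ∧ HasSum c s ∧ HasSum (fun n => c n • rankOne (e n) (f n)) u }

/-- Membership in `𝔊₁ˢᵃ`, the self-adjoint trace class operators. -/
def Gsa (u : H →L[ℂ] H) : Prop := IsTraceClass u ∧ IsSelfAdjoint u

/-- Membership in `𝔊₁⁺`, the positive trace class operators. -/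
def Gpos (u : H →L[ℂ] H) : Prop := IsTraceClass u ∧ PosOp u

/-- The trace, computed in a fixed Hilbert basis of `H`. -/
def Trace (u : H →L[ℂ] H) : ℝ :=
  ∑' i : (exists_hilbertBasis ℂ H).choose,
    (inner ℂ ((exists_hilbertBasis ℂ H).choose_spec.choose i)
      (u ((exists_hilbertBasis ℂ H).choose_spec.choose i)) : ℂ).re
/-- The absolute value `|u|` of a (self-adjoint) bounded operator, via the
continuous functional calculus. -/
def absOp (u : H →L[ℂ] H) : H →L[ℂ] H := cfc (fun x : ℝ => |x|) u

/-- `D` is a (real) subspace of `𝔊₁ˢᵃ`. -/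
structure IsDom (D : Set (H →L[ℂ] H)) : Prop where
  subset : ∀ u ∈ D, Gsa u
  zero_mem : (0 : H →L[ℂ] H) ∈ D
  add_mem : ∀ u ∈ D, ∀ v ∈ D, u + v ∈ D
  smul_mem : ∀ (c : ℝ), ∀ u ∈ D, c • u ∈ D

/-- `K` is a linear operator from `D ⊆ 𝔊₁ˢᵃ` into `𝔊₁ˢᵃ`. -/
structure IsLinMap (D : Set (H →L[ℂ] H)) (K : (H →L[ℂ] H) → (H →L[ℂ] H)) : Prop where
  maps : ∀ u ∈ D, Gsa (K u)
  map_add : ∀ u ∈ D, ∀ v ∈ D, K (u + v) = K u + K v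
  map_smul : ∀ (c : ℝ), ∀ u ∈ D, K (c • u) = c • K u

/-- `K` (defined on `D`) is positivity preserving. -/
def PosPres (D : Set (H →L[ℂ] H)) (K : (H →L[ℂ] H) → (H →L[ℂ] H)) : Prop :=
  ∀ u ∈ D, PosOp u → PosOp (K u)

/-- The set of all of `𝔊₁ˢᵃ`, as a domain. -/
def GsaSet (H : Type*) [NormedAddCommGroup H] [InnerProductSpace ℂ H] [CompleteSpace H] :
    Set (H →L[ℂ] H) :=
  { u | Gsa u }

/-- A bounded (everywhere defined) operator on `𝔊₁ˢᵃ`. -/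
structure IsBddOp (A : (H →L[ℂ] H) → (H →L[ℂ] H)) : Prop where
  lin : IsLinMap (GsaSet H) A
  bdd : ∃ M : ℝ, ∀ u, Gsa u → traceNorm (A u) ≤ M * traceNorm u

/-- The operator norm of an operator on `𝔊₁ˢᵃ` with respect to the trace norm. -/
def opNorm₁ (A : (H →L[ℂ] H) → (H →L[ℂ] H)) : ℝ :=
  sInf { M : ℝ | 0 ≤ M ∧ ∀ u, Gsa u → traceNorm (A u) ≤ M * traceNorm u }

/-- `S` is a `C₀`-semigroup on `𝔊₁ˢᵃ` (with respect to the trace norm). -/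
structure IsC0Semigroup (S : ℝ → (H →L[ℂ] H) → (H →L[ℂ] H)) : Prop where
  lin : ∀ t : ℝ, 0 < t → IsLinMap (GsaSet H) (S t)
  comp : ∀ s t : ℝ, 0 < s → 0 < t → ∀ u, Gsa u → S (s + t) u = S s (S t u)
  strong : ∀ u, Gsa u →
    Tendsto (fun t : ℝ => traceNorm (S t u - u)) (nhdsWithin 0 (Set.Ioi 0)) (nhds 0)

/-- `S` is a contraction semigroup for the trace norm. -/
def IsContractionSG (S : ℝ → (H →L[ℂ] H) → (H →L[ℂ] H)) : Prop :=
  ∀ t : ℝ, 0 < t → ∀ u, Gsa u → traceNorm (S t u) ≤ traceNorm u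

/-- `S` is a bounded semigroup for the trace norm. -/
def IsBoundedSG (S : ℝ → (H →L[ℂ] H) → (H →L[ℂ] H)) : Prop :=
  ∃ M : ℝ, ∀ t : ℝ, 0 < t → ∀ u, Gsa u → traceNorm (S t u) ≤ M * traceNorm u

/-- `S` is a positivity preserving semigroup. -/
def IsPosPresSG (S : ℝ → (H →L[ℂ] H) → (H →L[ℂ] H)) : Prop :=
  ∀ t : ℝ, 0 < t → ∀ u, Gpos u → PosOp (S t u)

/-- `-A`, with domain `D`, is the generator of the semigroup `S`:  on `D` one has
`A u = lim_{t ↓ 0} (u - S_t u)/t` in trace norm, and `D` consists of exactly those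
`u ∈ 𝔊₁ˢᵃ` for which this limit exists in `𝔊₁ˢᵃ`. -/
structure GeneratesNeg (S : ℝ → (H →L[ℂ] H) → (H →L[ℂ] H))
    (D : Set (H →L[ℂ] H)) (A : (H →L[ℂ] H) → (H →L[ℂ] H)) : Prop where
  dom : IsDom D
  lin : IsLinMap D A
  deriv : ∀ u ∈ D,
    Tendsto (fun t : ℝ => traceNorm (t⁻¹ • (u - S t u) - A u))
      (nhdsWithin 0 (Set.Ioi 0)) (nhds 0)
  max : ∀ u, Gsa u → ∀ v, Gsa v →
    Tendsto (fun t : ℝ => traceNorm (t⁻¹ • (u - S t u) - v))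
      (nhdsWithin 0 (Set.Ioi 0)) (nhds 0) → u ∈ D

/-- `R = (λ I + A)⁻¹` where `A` has domain `D ⊆ 𝔊₁ˢᵃ`. -/
def IsResolvent (D : Set (H →L[ℂ] H)) (A : (H →L[ℂ] H) → (H →L[ℂ] H)) (lam : ℝ)
    (R : (H →L[ℂ] H) → (H →L[ℂ] H)) : Prop :=
  (∀ u, Gsa u → R u ∈ D ∧ lam • R u + A (R u) = u) ∧ (∀ u ∈ D, R (lam • u + A u) = u)

/-- The operator `A` with domain `D ⊆ 𝔊₁ˢᵃ` is m-accretive: for every `λ > 0` the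
operator `λ I + A` is injective with dense... in fact bijective from `D` onto `𝔊₁ˢᵃ`
and `‖(λ I + A)⁻¹‖ ≤ 1/λ`. -/
def IsMAccretive (D : Set (H →L[ℂ] H)) (A : (H →L[ℂ] H) → (H →L[ℂ] H)) : Prop :=
  ∀ lam : ℝ, 0 < lam →
    (∀ u, Gsa u → ∃ v ∈ D, lam • v + A v = u) ∧
    (∀ v ∈ D, lam * traceNorm v ≤ traceNorm (lam • v + A v))

/-- The operator `A` with domain `D` is quasi-m-accretive: `ω I + A` is m-accretive
for some `ω ≥ 0`. -/
def IsQuasiMAccretive (D : Set (H →L[ℂ] H)) (A : (H →L[ℂ] H) → (H →L[ℂ] H)) : Prop :=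
  ∃ ω : ℝ, 0 ≤ ω ∧ IsMAccretive D (fun u => ω • u + A u)

/-- `(K_α)_{α ∈ J}` is a functional regularisation of the perturbation
`K : D(H) → 𝔊₁ˢᵃ`, where `-Hop` (with domain `D`) generates the unperturbed
semigroup (Definition 1.1). -/
structure IsFunReg (D : Set (H →L[ℂ] H)) (Hop K : (H →L[ℂ] H) → (H →L[ℂ] H))
    {J : Type*} [Preorder J] (Kf : J → (H →L[ℂ] H) → (H →L[ℂ] H)) : Prop where
  lin : ∀ α, IsLinMap D (Kf α)
  pos : ∀ α, PosPres D (Kf α)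
  bound : ∀ α, ∃ a b : ℝ, 0 ≤ a ∧ 0 ≤ b ∧ b < 1 ∧
    ∀ u ∈ D, PosOp u → Trace (Kf α u) ≤ a * Trace u + b * Trace (Hop u)
  mono : ∀ α β : J, α ≤ β → ∀ u ∈ D, PosOp u →
    PosOp (Kf β u - Kf α u) ∧ PosOp (K u - Kf β u)
  conv : ∀ u ∈ D, PosOp u → ∃ V : Submodule ℂ H, Dense (V : Set H) ∧
    ∀ x ∈ V, Tendsto (fun α => (inner ℂ x ((Kf α u) x) : ℂ)) atTop (nhds (inner ℂ x ((K u) x)))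

/-- `D'` is a core for the operator `A` with domain `D`:  `D' ⊆ D` is dense in `D`
for the graph norm. -/
def IsCore (D : Set (H →L[ℂ] H)) (A : (H →L[ℂ] H) → (H →L[ℂ] H))
    (D' : Set (H →L[ℂ] H)) : Prop :=
  D' ⊆ D ∧ ∀ u ∈ D, ∀ ε : ℝ, 0 < ε → ∃ v ∈ D',
    traceNorm (u - v) + traceNorm (A u - A v) < ε

/-!
If `S t ≤ T t` for all `t > 0`, then for positive `u ∈ D(H)` the positive operators
`t⁻¹ (T t u - S t u) = t⁻¹ (u - S t u) - t⁻¹ (u - T t u)` converge to `H u - L u`, and the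
positive cone is closed.

Conversely, for positive `u ∈ D(H)` the path `r ↦ T (t - r) (S r u)`, `0 ≤ r ≤ t`, runs from
`T t u` to `S t u` with derivative `-T (t - r) ((H - L) (S r u)) ≤ 0`, because `S r u` is a positive
element of `D(H)` and `T (t - r)` preserves positivity. So every quadratic form `Re ⟪x, · x⟫`
decreases along it. A general positive `u` is the limit of the positive elements
`ε⁻¹ ∫₀^ε S s u ds` of `D(H)`. The integrals are taken in `𝔊₁ˢᵃ` with the trace norm, which is
complete because a trace-norm summable series of nuclear representations merges into one.
-/

end KatoReg

open Set

namespace KatoReg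

section OperatorFamilies

variable {𝕜 E F X : Type*} [NontriviallyNormedField 𝕜] [NormedAddCommGroup E] [NormedSpace 𝕜 E]
  [NormedAddCommGroup F] [NormedSpace 𝕜 F] {M : ℝ}

theorem tendsto_apply_of_norm_le {l : Filter X} {A : X → E →L[𝕜] F} (hA : ∀ a, ‖A a‖ ≤ M)
    {w : X → E} {x : E} {y : F} (hAx : Tendsto (fun a => A a x) l (𝓝 y))
    (hw : Tendsto w l (𝓝 x)) : Tendsto (fun a => A a (w a)) l (𝓝 y) := by
  have hsmall : Tendsto (fun a => A a (w a - x)) l (𝓝 0) := by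
    refine squeeze_zero_norm (fun a => (A a).le_of_opNorm_le (hA a) _) ?_
    simpa using (tendsto_iff_norm_sub_tendsto_zero.1 hw).const_mul M
  simpa using hsmall.add hAx

theorem continuous_apply_of_norm_le [TopologicalSpace X] {A : X → E →L[𝕜] F}
    (hA : ∀ a, ‖A a‖ ≤ M) (hAc : ∀ v, Continuous fun a => A a v) {w : X → E}
    (hw : Continuous w) : Continuous fun a => A a (w a) :=
  continuous_iff_continuousAt.2 fun a =>
    tendsto_apply_of_norm_le hA ((hAc _).tendsto a) (hw.tendsto a)

theorem hasDerivAt_apply_of_norm_le {A : 𝕜 → E →L[𝕜] F} (hA : ∀ r, ‖A r‖ ≤ M)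
    {w : 𝕜 → E} {w' : E} {d : F} {s : 𝕜} (hAc : ContinuousAt (fun r => A r w') s)
    (hAd : HasDerivAt (fun r => A r (w s)) d s) (hw : HasDerivAt w w' s) :
    HasDerivAt (fun r => A r (w r)) (A s w' + d) s := by
  rw [hasDerivAt_iff_tendsto_slope] at hAd hw ⊢
  have hslope : ∀ r, slope (fun r => A r (w r)) s r
      = A r (slope w s r) + slope (fun r => A r (w s)) s r := by
    intro r
    rw [slope_def_module, slope_def_module, slope_def_module, map_smul, map_sub, ← smul_add]
    abel_nf
  exact ((tendsto_apply_of_norm_le hA (hAc.tendsto.mono_left nhdsWithin_le_nhds) hw).add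
    hAd).congr fun r => (hslope r).symm

end OperatorFamilies

/-- The semigroup is extended by `T t = 1` for `t ≤ 0`, which makes its orbits continuous on
all of `ℝ`. -/
structure BoundedC0Semigroup (E : Type*) [NormedAddCommGroup E] [NormedSpace ℝ E] where
  toFun : ℝ → E →L[ℝ] E
  eq_one_of_nonpos : ∀ t ≤ 0, toFun t = 1
  add_apply : ∀ s t x, 0 ≤ s → 0 ≤ t → toFun (s + t) x = toFun s (toFun t x)
  bound : ℝ
  norm_le : ∀ t, ‖toFun t‖ ≤ bound
  tendsto_nhdsGT : ∀ x, Tendsto (fun t => toFun t x) (𝓝[>] 0) (𝓝 x)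

namespace BoundedC0Semigroup

variable {E : Type*} [NormedAddCommGroup E] [NormedSpace ℝ E] (𝒮 𝒯 : BoundedC0Semigroup E)

instance : CoeFun (BoundedC0Semigroup E) fun _ => ℝ → E →L[ℝ] E := ⟨toFun⟩

theorem apply_of_nonpos {t : ℝ} (ht : t ≤ 0) (x : E) : 𝒮 t x = x := by
  show 𝒮.toFun t x = x
  rw [𝒮.eq_one_of_nonpos t ht]
  rfl

theorem apply_max_zero (t : ℝ) (x : E) : 𝒮 (max t 0) x = 𝒮 t x := by
  rcases le_total t 0 with ht | ht
  · rw [max_eq_right ht, 𝒮.apply_of_nonpos le_rfl, 𝒮.apply_of_nonpos ht]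
  · rw [max_eq_left ht]

theorem tendsto_nhds_zero (x : E) : Tendsto (fun t => 𝒮 t x) (𝓝 0) (𝓝 x) := by
  rw [← nhdsLE_sup_nhdsGT, tendsto_sup]
  refine ⟨tendsto_const_nhds.congr' ?_, 𝒮.tendsto_nhdsGT x⟩
  filter_upwards [self_mem_nhdsWithin] with t ht using (𝒮.apply_of_nonpos ht x).symm

theorem norm_apply_sub_apply_le {s t : ℝ} (hs : 0 ≤ s) (hst : s ≤ t) (x : E) :
    ‖𝒮 t x - 𝒮 s x‖ ≤ 𝒮.bound * ‖𝒮 (t - s) x - x‖ := by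
  have ht : 𝒮 t x = 𝒮 s (𝒮 (t - s) x) := by
    rw [← 𝒮.add_apply _ _ _ hs (sub_nonneg.2 hst), add_sub_cancel]
  rw [ht, ← map_sub]
  exact (𝒮 s).le_of_opNorm_le (𝒮.norm_le s) _

theorem continuous_orbit (x : E) : Continuous fun t => 𝒮 t x := by
  rw [show (fun t => 𝒮 t x) = fun t => 𝒮 (max t 0) x from
    funext fun t => (𝒮.apply_max_zero t x).symm]
  refine continuous_iff_continuousAt.2 fun t₀ => ?_
  set m : ℝ → ℝ := fun t => max t 0
  have hm : Continuous m := continuous_id.max continuous_const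
  have hdist : ∀ t, ‖𝒮 (m t) x - 𝒮 (m t₀) x‖ ≤ 𝒮.bound * ‖𝒮 |m t - m t₀| x - x‖ := by
    intro t
    rcases le_total (m t₀) (m t) with h | h
    · rw [abs_of_nonneg (sub_nonneg.2 h)]
      exact 𝒮.norm_apply_sub_apply_le (le_max_right _ _) h x
    · rw [norm_sub_rev, abs_sub_comm, abs_of_nonneg (sub_nonneg.2 h)]
      exact 𝒮.norm_apply_sub_apply_le (le_max_right _ _) h x
  have hlim : Tendsto (fun t => |m t - m t₀|) (𝓝 t₀) (𝓝 0) := by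
    simpa using ((hm.sub (continuous_const (y := m t₀))).abs.tendsto t₀)
  refine tendsto_iff_norm_sub_tendsto_zero.2 (squeeze_zero (fun _ => norm_nonneg _) hdist ?_)
  simpa using ((tendsto_iff_norm_sub_tendsto_zero.1 (𝒮.tendsto_nhds_zero x)).comp hlim).const_mul
    𝒮.bound

/-- `x` lies in the domain of the generator `-A` of `𝒮`, and `A x = y`. -/
def HasNegGen (x y : E) : Prop :=
  Tendsto (fun t : ℝ => t⁻¹ • (x - 𝒮 t x)) (𝓝[>] 0) (𝓝 y)

variable {𝒮}

theorem HasNegGen.smul {x y : E} (h : 𝒮.HasNegGen x y) (c : ℝ) : 𝒮.HasNegGen (c • x) (c • y) := by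
  refine (h.const_smul c).congr fun t => ?_
  rw [map_smul, ← smul_sub, smul_comm]

theorem HasNegGen.apply {x y : E} (h : 𝒮.HasNegGen x y) {s : ℝ} (hs : 0 ≤ s) :
    𝒮.HasNegGen (𝒮 s x) (𝒮 s y) := by
  refine (((𝒮 s).continuous.tendsto y).comp h).congr' ?_
  filter_upwards [self_mem_nhdsWithin] with t (ht : 0 < t)
  rw [Function.comp_apply, map_smul, map_sub, ← 𝒮.add_apply _ _ _ hs ht.le,
    add_comm, 𝒮.add_apply _ _ _ ht.le hs]

theorem slope_orbit (x : E) {a b : ℝ} (ha : 0 ≤ a) (hab : a ≤ b) :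
    slope (fun t => 𝒮 t x) a b = 𝒮 a ((b - a)⁻¹ • (𝒮 (b - a) x - x)) := by
  rw [slope_def_module, map_smul, map_sub, ← 𝒮.add_apply _ _ _ ha (sub_nonneg.2 hab),
    add_sub_cancel]

theorem HasNegGen.hasDerivAt {x y : E} (h : 𝒮.HasNegGen x y) {τ : ℝ} (hτ : 0 < τ) :
    HasDerivAt (fun t => 𝒮 t x) (-𝒮 τ y) τ := by
  rw [hasDerivAt_iff_tendsto_slope]
  have hslope : ∀ᶠ r in 𝓝[≠] τ, 𝒮 (min r τ) (|r - τ|⁻¹ • (𝒮 |r - τ| x - x))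
      = slope (fun t => 𝒮 t x) τ r := by
    filter_upwards [nhdsWithin_le_nhds (lt_mem_nhds hτ)] with r hr
    rcases le_total r τ with hrτ | hτr
    · rw [min_eq_left hrτ, abs_sub_comm, abs_of_nonneg (sub_nonneg.2 hrτ), slope_comm,
        𝒮.slope_orbit x hr.le hrτ]
    · rw [min_eq_right hτr, abs_of_nonneg (sub_nonneg.2 hτr), 𝒮.slope_orbit x hτ.le hτr]
  have hgap : Tendsto (fun r => |r - τ|) (𝓝[≠] τ) (𝓝[>] 0) := by
    refine tendsto_nhdsWithin_iff.2 ⟨?_, ?_⟩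
    · simpa using ((continuous_sub_right τ).abs.tendsto τ).mono_left nhdsWithin_le_nhds
    · filter_upwards [self_mem_nhdsWithin] with r hr using abs_pos.2 (sub_ne_zero.2 hr)
  have hquot : Tendsto (fun t : ℝ => t⁻¹ • (𝒮 t x - x)) (𝓝[>] 0) (𝓝 (-y)) := by
    simpa [← smul_neg] using h.neg
  refine (tendsto_apply_of_norm_le (fun r => 𝒮.norm_le _) ?_ (hquot.comp hgap)).congr' hslope
  have hmin : Continuous fun r : ℝ => min r τ := continuous_id.min continuous_const
  rw [← map_neg]
  simpa only [Function.comp_def, min_self] using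
    (((𝒮.continuous_orbit (-y)).comp hmin).tendsto τ).mono_left nhdsWithin_le_nhds


variable (𝒮)

theorem hasDerivAt_integral_orbit [CompleteSpace E] (x : E) (b : ℝ) :
    HasDerivAt (fun b => ∫ s in (0 : ℝ)..b, 𝒮 s x) (𝒮 b x) b :=
  ((𝒮.continuous_orbit x).integral_hasStrictDerivAt 0 b).hasDerivAt

theorem apply_integral_orbit [CompleteSpace E] (x : E) {ε t : ℝ} (hε : 0 ≤ ε) (ht : 0 ≤ t) :
    𝒮 t (∫ s in (0 : ℝ)..ε, 𝒮 s x)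
      = (∫ s in (0 : ℝ)..ε + t, 𝒮 s x) - ∫ s in (0 : ℝ)..t, 𝒮 s x := by
  have hint : ∀ a b, IntervalIntegrable (fun s => 𝒮 s x) MeasureTheory.volume a b :=
    (𝒮.continuous_orbit x).intervalIntegrable
  rw [← (𝒮 t).intervalIntegral_comp_comm (hint 0 ε),
    intervalIntegral.integral_interval_sub_left (hint _ _) (hint _ _),
    intervalIntegral.integral_congr (g := fun s => 𝒮 (s + t) x) fun s hs => ?_,
    intervalIntegral.integral_comp_add_right (fun s => 𝒮 s x), zero_add]
  rw [uIcc_of_le hε] at hs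
  show _ = 𝒮 (s + t) x
  rw [add_comm]
  exact (𝒮.add_apply t s x ht hs.1).symm

theorem hasNegGen_integral_orbit [CompleteSpace E] (x : E) {ε : ℝ} (hε : 0 ≤ ε) :
    𝒮.HasNegGen (∫ s in (0 : ℝ)..ε, 𝒮 s x) (x - 𝒮 ε x) := by
  have h := (𝒮.hasDerivAt_integral_orbit x 0).tendsto_slope_zero_right.sub
    (𝒮.hasDerivAt_integral_orbit x ε).tendsto_slope_zero_right
  rw [𝒮.apply_of_nonpos le_rfl] at h
  refine h.congr' ?_
  filter_upwards [self_mem_nhdsWithin] with t (ht : 0 < t)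
  rw [𝒮.apply_integral_orbit x hε ht.le, ← smul_sub, zero_add, intervalIntegral.integral_same,
    sub_zero]
  abel_nf

def average (x : E) (ε : ℝ) : E := ε⁻¹ • ∫ s in (0 : ℝ)..ε, 𝒮 s x

theorem hasNegGen_average [CompleteSpace E] (x : E) {ε : ℝ} (hε : 0 ≤ ε) :
    𝒮.HasNegGen (𝒮.average x ε) (ε⁻¹ • (x - 𝒮 ε x)) :=
  (𝒮.hasNegGen_integral_orbit x hε).smul ε⁻¹

theorem tendsto_average [CompleteSpace E] (x : E) :
    Tendsto (𝒮.average x) (𝓝[>] 0) (𝓝 x) := by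
  show Tendsto (fun ε => ε⁻¹ • ∫ s in (0 : ℝ)..ε, 𝒮 s x) _ _
  simpa [𝒮.apply_of_nonpos le_rfl] using
    (𝒮.hasDerivAt_integral_orbit x 0).tendsto_slope_zero_right

variable {𝒮 𝒯}

theorem hasDerivAt_apply_sub_apply {x y z : E} (hx : 𝒮.HasNegGen x y) {s t : ℝ}
    (hz : 𝒯.HasNegGen (𝒮 s x) z) (hs : 0 < s) (hst : s < t) :
    HasDerivAt (fun r => 𝒯 (t - r) (𝒮 r x)) (𝒯 (t - s) (z - 𝒮 s y)) s := by
  have hT : HasDerivAt (fun r => 𝒯 (t - r) (𝒮 s x)) (𝒯 (t - s) z) s := by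
    convert (hz.hasDerivAt (sub_pos.2 hst)).scomp s ((hasDerivAt_id s).const_sub t) using 1
    · rfl
    · simp
  have hcont : ContinuousAt (fun r => 𝒯 (t - r) (-𝒮 s y)) s :=
    ((𝒯.continuous_orbit _).comp (continuous_sub_left t)).continuousAt
  simpa [sub_eq_neg_add] using
    hasDerivAt_apply_of_norm_le (fun r => 𝒯.norm_le (t - r)) hcont hT (hx.hasDerivAt hs)

theorem apply_le_apply_of_hasNegGen (φ : E →L[ℝ] ℝ) {x y : E} (hx : 𝒮.HasNegGen x y) {t : ℝ}
    (ht : 0 ≤ t) (h : ∀ s ∈ Ioo 0 t, ∃ z, 𝒯.HasNegGen (𝒮 s x) z ∧ 0 ≤ φ (𝒯 (t - s) (𝒮 s y - z))) :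
    φ (𝒮 t x) ≤ φ (𝒯 t x) := by
  set f : ℝ → ℝ := fun r => φ (𝒯 (t - r) (𝒮 r x))
  have hderiv : ∀ s ∈ Ioo 0 t, ∃ d ≤ 0, HasDerivAt f d s := by
    intro s hs
    obtain ⟨z, hz, hpos⟩ := h s hs
    refine ⟨φ (𝒯 (t - s) (z - 𝒮 s y)), ?_,
      φ.hasFDerivAt.comp_hasDerivAt s (hasDerivAt_apply_sub_apply hx hz hs.1 hs.2)⟩
    rw [← neg_sub (𝒮 s y), map_neg, map_neg]
    exact neg_nonpos.2 hpos
  have hcont : Continuous f := φ.continuous.comp <|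
    continuous_apply_of_norm_le (fun r => 𝒯.norm_le (t - r))
      (fun v => (𝒯.continuous_orbit v).comp (continuous_sub_left t)) (𝒮.continuous_orbit x)
  have hanti : AntitoneOn f (Icc 0 t) := by
    refine antitoneOn_of_deriv_nonpos (convex_Icc 0 t) hcont.continuousOn ?_ ?_ <;>
      rw [interior_Icc]
    · intro s hs
      obtain ⟨d, -, hd⟩ := hderiv s hs
      exact hd.differentiableAt.differentiableWithinAt
    · intro s hs
      obtain ⟨d, hd0, hd⟩ := hderiv s hs
      rwa [hd.deriv]
  simpa [f, 𝒮.apply_of_nonpos le_rfl, 𝒯.apply_of_nonpos le_rfl] using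
    hanti ⟨le_rfl, ht⟩ ⟨ht, le_rfl⟩ ht

end BoundedC0Semigroup

section Cone

variable {E ι : Type*} [NormedAddCommGroup E] [NormedSpace ℝ E] (φ : ι → E →L[ℝ] ℝ)

def posCone : Set E := {v | ∀ i, 0 ≤ φ i v}

theorem isClosed_posCone : IsClosed (posCone φ) := by
  rw [show posCone φ = ⋂ i, {v | 0 ≤ φ i v} by ext; simp [posCone]]
  exact isClosed_iInter fun i => isClosed_le continuous_const (φ i).continuous

theorem smul_mem_posCone {v : E} (hv : v ∈ posCone φ) {c : ℝ} (hc : 0 ≤ c) :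
    c • v ∈ posCone φ := fun i => by
  rw [map_smul, smul_eq_mul]
  exact mul_nonneg hc (hv i)

namespace BoundedC0Semigroup

variable {φ} {𝒮 𝒯 : BoundedC0Semigroup E}

theorem average_mem_posCone [CompleteSpace E] (h𝒮 : ∀ t, MapsTo (𝒮 t) (posCone φ) (posCone φ))
    {x : E} (hx : x ∈ posCone φ) {ε : ℝ} (hε : 0 ≤ ε) : 𝒮.average x ε ∈ posCone φ := by
  refine smul_mem_posCone φ (fun i => ?_) (inv_nonneg.2 hε)
  rw [← (φ i).intervalIntegral_comp_comm ((𝒮.continuous_orbit x).intervalIntegrable 0 ε)]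
  exact intervalIntegral.integral_nonneg hε fun s _ => h𝒮 s hx i

theorem sub_mem_posCone_of_le
    (hST : ∀ t, 0 < t → ∀ x ∈ posCone φ, 𝒯 t x - 𝒮 t x ∈ posCone φ) {x y z : E}
    (hx : x ∈ posCone φ) (hy : 𝒮.HasNegGen x y) (hz : 𝒯.HasNegGen x z) :
    y - z ∈ posCone φ := by
  refine (isClosed_posCone φ).mem_of_tendsto (hy.sub hz) ?_
  filter_upwards [self_mem_nhdsWithin] with t (ht : 0 < t)
  rw [← smul_sub, sub_sub_sub_cancel_left]
  exact smul_mem_posCone φ (hST t ht x hx) (inv_nonneg.2 ht.le)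

theorem sub_mem_posCone_of_hasNegGen (h𝒮 : ∀ t, MapsTo (𝒮 t) (posCone φ) (posCone φ))
    (h𝒯 : ∀ t, MapsTo (𝒯 t) (posCone φ) (posCone φ))
    (hdom : ∀ x y, 𝒮.HasNegGen x y → ∃ z, 𝒯.HasNegGen x z)
    (hgen : ∀ x y z, x ∈ posCone φ → 𝒮.HasNegGen x y → 𝒯.HasNegGen x z → y - z ∈ posCone φ)
    {x y : E} (hx : x ∈ posCone φ) (hy : 𝒮.HasNegGen x y) {t : ℝ} (ht : 0 ≤ t) :
    𝒯 t x - 𝒮 t x ∈ posCone φ := fun i => by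
  rw [map_sub, sub_nonneg]
  refine apply_le_apply_of_hasNegGen (φ i) hy ht fun s hs => ?_
  have hys := hy.apply hs.1.le
  obtain ⟨z, hz⟩ := hdom _ _ hys
  exact ⟨z, hz, h𝒯 (t - s) (hgen _ _ _ (h𝒮 s hx) hys hz) i⟩

theorem sub_mem_posCone [CompleteSpace E] (h𝒮 : ∀ t, MapsTo (𝒮 t) (posCone φ) (posCone φ))
    (h𝒯 : ∀ t, MapsTo (𝒯 t) (posCone φ) (posCone φ))
    (hdom : ∀ x y, 𝒮.HasNegGen x y → ∃ z, 𝒯.HasNegGen x z)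
    (hgen : ∀ x y z, x ∈ posCone φ → 𝒮.HasNegGen x y → 𝒯.HasNegGen x z → y - z ∈ posCone φ)
    {x : E} (hx : x ∈ posCone φ) {t : ℝ} (ht : 0 ≤ t) : 𝒯 t x - 𝒮 t x ∈ posCone φ := by
  refine (isClosed_posCone φ).mem_of_tendsto
    (((𝒯 t - 𝒮 t).continuous.tendsto x).comp (𝒮.tendsto_average x)) ?_
  filter_upwards [self_mem_nhdsWithin] with ε (hε : 0 < ε)
  exact sub_mem_posCone_of_hasNegGen h𝒮 h𝒯 hdom hgen (average_mem_posCone h𝒮 hx hε.le)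
    (𝒮.hasNegGen_average x hε.le) ht

theorem sub_mem_posCone_iff [CompleteSpace E] (h𝒮 : ∀ t, MapsTo (𝒮 t) (posCone φ) (posCone φ))
    (h𝒯 : ∀ t, MapsTo (𝒯 t) (posCone φ) (posCone φ))
    (hdom : ∀ x y, 𝒮.HasNegGen x y → ∃ z, 𝒯.HasNegGen x z) :
    (∀ t, 0 < t → ∀ x ∈ posCone φ, 𝒯 t x - 𝒮 t x ∈ posCone φ) ↔
      ∀ x y z, x ∈ posCone φ → 𝒮.HasNegGen x y → 𝒯.HasNegGen x z → y - z ∈ posCone φ :=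
  ⟨fun hST _ _ _ hx hy hz => sub_mem_posCone_of_le hST hx hy hz,
    fun hgen _ ht _ hx => sub_mem_posCone h𝒮 h𝒯 hdom hgen hx ht.le⟩

end BoundedC0Semigroup

end Cone

section TraceClass

variable {H : Type*} [NormedAddCommGroup H] [InnerProductSpace ℂ H]

theorem posOp_iff_isPositive (u : H →L[ℂ] H) : PosOp u ↔ u.IsPositive := by
  rw [ContinuousLinearMap.isPositive_iff_complex]
  refine forall_congr' fun x => ?_
  rw [← inner_conj_symm, Complex.nonneg_iff, Complex.conj_re, Complex.conj_im]
  simp [Complex.ext_iff, eq_comm, and_comm]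

theorem rankOne_apply (x y z : H) : rankOne x y z = inner ℂ y z • x := rfl

theorem norm_rankOne_le (x y : H) : ‖rankOne x y‖ ≤ ‖x‖ * ‖y‖ :=
  (ContinuousLinearMap.opNorm_comp_le _ _).trans_eq (by simp)

theorem rankOne_smul_left (r : ℝ) (x y : H) : rankOne (r • x) y = r • rankOne x y := by
  ext z
  simp [rankOne_apply, smul_comm r]

theorem norm_smul_rankOne_le {c : ℝ} (hc : 0 ≤ c) {x y : H} (hx : ‖x‖ ≤ 1) (hy : ‖y‖ ≤ 1) :
    ‖c • rankOne x y‖ ≤ c := by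
  rw [norm_smul, Real.norm_of_nonneg hc]
  refine mul_le_of_le_one_right hc ((norm_rankOne_le x y).trans ?_)
  simpa using mul_le_one₀ hx (norm_nonneg y) hy

def nuclearWeights (u : H →L[ℂ] H) : Set ℝ :=
  { s : ℝ | ∃ (c : ℕ → ℝ) (e f : ℕ → H), (∀ n, 0 ≤ c n) ∧ (∀ n, ‖e n‖ ≤ 1) ∧
    (∀ n, ‖f n‖ ≤ 1) ∧ HasSum c s ∧ HasSum (fun n => c n • rankOne (e n) (f n)) u }

theorem traceNorm_eq_sInf (u : H →L[ℂ] H) : traceNorm u = sInf (nuclearWeights u) := rfl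

theorem nonneg_of_mem_nuclearWeights {u : H →L[ℂ] H} {s : ℝ} (hs : s ∈ nuclearWeights u) :
    0 ≤ s := by
  obtain ⟨c, -, -, hc, -, -, hcs, -⟩ := hs
  exact hcs.nonneg hc

theorem bddBelow_nuclearWeights (u : H →L[ℂ] H) : BddBelow (nuclearWeights u) :=
  ⟨0, fun _ => nonneg_of_mem_nuclearWeights⟩

theorem isTraceClass_iff_nonempty {u : H →L[ℂ] H} :
    IsTraceClass u ↔ (nuclearWeights u).Nonempty := by
  constructor
  · rintro ⟨c, e, f, hc, he, hf, hcs, hu⟩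
    exact ⟨_, c, e, f, hc, he, hf, hcs.hasSum, hu⟩
  · rintro ⟨s, c, e, f, hc, he, hf, hcs, hu⟩
    exact ⟨c, e, f, hc, he, hf, hcs.summable, hu⟩

theorem traceNorm_nonneg (u : H →L[ℂ] H) : 0 ≤ traceNorm u :=
  Real.sInf_nonneg fun _ => nonneg_of_mem_nuclearWeights

theorem traceNorm_le_of_mem {u : H →L[ℂ] H} {s : ℝ} (hs : s ∈ nuclearWeights u) :
    traceNorm u ≤ s :=
  csInf_le (bddBelow_nuclearWeights u) hs

theorem exists_mem_nuclearWeights_lt {u : H →L[ℂ] H} (hu : IsTraceClass u) {η : ℝ} (hη : 0 < η) :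
    ∃ s ∈ nuclearWeights u, s < traceNorm u + η :=
  exists_lt_of_csInf_lt (isTraceClass_iff_nonempty.1 hu) (lt_add_of_pos_right _ hη)

theorem zero_mem_nuclearWeights : (0 : ℝ) ∈ nuclearWeights (0 : H →L[ℂ] H) :=
  ⟨0, 0, 0, fun _ => le_rfl, fun _ => by simp, fun _ => by simp, hasSum_zero,
    by simp [hasSum_zero]⟩

theorem norm_le_of_mem_nuclearWeights {u : H →L[ℂ] H} {s : ℝ} (hs : s ∈ nuclearWeights u) :
    ‖u‖ ≤ s := by
  obtain ⟨c, e, f, hc, he, hf, hcs, hu⟩ := hs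
  exact hu.norm_le_of_bounded hcs fun n => norm_smul_rankOne_le (hc n) (he n) (hf n)

theorem norm_le_traceNorm {u : H →L[ℂ] H} (hu : IsTraceClass u) : ‖u‖ ≤ traceNorm u :=
  le_csInf (isTraceClass_iff_nonempty.1 hu) fun _ => norm_le_of_mem_nuclearWeights

theorem mem_nuclearWeights_of_equiv {ι : Type*} (g : ι ≃ ℕ) {c : ι → ℝ} {e f : ι → H}
    (hc : ∀ i, 0 ≤ c i) (he : ∀ i, ‖e i‖ ≤ 1) (hf : ∀ i, ‖f i‖ ≤ 1) {s : ℝ} (hs : HasSum c s)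
    {u : H →L[ℂ] H} (hu : HasSum (fun i => c i • rankOne (e i) (f i)) u) :
    s ∈ nuclearWeights u :=
  ⟨c ∘ g.symm, e ∘ g.symm, f ∘ g.symm, fun _ => hc _, fun _ => he _, fun _ => hf _,
    g.symm.hasSum_iff.2 hs, g.symm.hasSum_iff.2 hu⟩

theorem add_mem_nuclearWeights {u v : H →L[ℂ] H} {s t : ℝ} (hs : s ∈ nuclearWeights u)
    (ht : t ∈ nuclearWeights v) : s + t ∈ nuclearWeights (u + v) := by
  obtain ⟨c, e, f, hc, he, hf, hcs, hu⟩ := hs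
  obtain ⟨c', e', f', hc', he', hf', hct, hv⟩ := ht
  exact mem_nuclearWeights_of_equiv Equiv.natSumNatEquivNat (c := Sum.elim c c')
    (e := Sum.elim e e') (f := Sum.elim f f') (Sum.forall.2 ⟨hc, hc'⟩) (Sum.forall.2 ⟨he, he'⟩)
    (Sum.forall.2 ⟨hf, hf'⟩) (HasSum.sum (f := Sum.elim c c') hcs hct)
    (HasSum.sum (f := fun i => Sum.elim c c' i • rankOne (Sum.elim e e' i) (Sum.elim f f' i)) hu hv)

theorem smul_mem_nuclearWeights {u : H →L[ℂ] H} {s : ℝ} (hs : s ∈ nuclearWeights u) (a : ℝ) :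
    |a| * s ∈ nuclearWeights (a • u) := by
  obtain ⟨c, e, f, hc, he, hf, hcs, hu⟩ := hs
  refine ⟨fun n => |a| * c n, fun n => (SignType.sign a : ℝ) • e n, f,
    fun n => mul_nonneg (abs_nonneg a) (hc n), fun n => ?_, hf, hcs.mul_left _, ?_⟩
  · have hsign : ‖(SignType.sign a : ℝ)‖ ≤ 1 := by
      rcases lt_trichotomy a 0 with h | h | h <;> simp [h]
    rw [norm_smul]
    exact mul_le_one₀ hsign (norm_nonneg _) (he n)
  · convert hu.const_smul a using 2 with n
    rw [rankOne_smul_left, smul_smul, smul_smul, mul_right_comm, abs_mul_sign]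

theorem IsTraceClass.add {u v : H →L[ℂ] H} (hu : IsTraceClass u) (hv : IsTraceClass v) :
    IsTraceClass (u + v) := by
  obtain ⟨s, hs⟩ := isTraceClass_iff_nonempty.1 hu
  obtain ⟨t, ht⟩ := isTraceClass_iff_nonempty.1 hv
  exact isTraceClass_iff_nonempty.2 ⟨_, add_mem_nuclearWeights hs ht⟩

theorem IsTraceClass.smul {u : H →L[ℂ] H} (hu : IsTraceClass u) (a : ℝ) : IsTraceClass (a • u) := by
  obtain ⟨s, hs⟩ := isTraceClass_iff_nonempty.1 hu
  exact isTraceClass_iff_nonempty.2 ⟨_, smul_mem_nuclearWeights hs a⟩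

theorem traceNorm_add_le {u v : H →L[ℂ] H} (hu : IsTraceClass u) (hv : IsTraceClass v) :
    traceNorm (u + v) ≤ traceNorm u + traceNorm v := by
  have hu' := isTraceClass_iff_nonempty.1 hu
  have hv' := isTraceClass_iff_nonempty.1 hv
  rw [traceNorm_eq_sInf, traceNorm_eq_sInf, traceNorm_eq_sInf,
    ← csInf_add hu' (bddBelow_nuclearWeights u) hv' (bddBelow_nuclearWeights v)]
  exact csInf_le_csInf (bddBelow_nuclearWeights _) (hu'.add hv')
    (Set.add_subset_iff.2 fun _ hs _ ht => add_mem_nuclearWeights hs ht)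

theorem traceNorm_smul_le {u : H →L[ℂ] H} (hu : IsTraceClass u) (a : ℝ) :
    traceNorm (a • u) ≤ |a| * traceNorm u := by
  have hu' := isTraceClass_iff_nonempty.1 hu
  rw [traceNorm_eq_sInf, traceNorm_eq_sInf, ← smul_eq_mul,
    ← Real.sInf_smul_of_nonneg (abs_nonneg a)]
  exact csInf_le_csInf (bddBelow_nuclearWeights _) (hu'.smul_set)
    (Set.smul_set_subset_iff.2 fun _ hs => smul_mem_nuclearWeights hs a)

theorem traceNorm_neg {u : H →L[ℂ] H} (hu : IsTraceClass u) : traceNorm (-u) = traceNorm u := by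
  refine le_antisymm (by simpa using traceNorm_smul_le hu (-1)) ?_
  simpa using traceNorm_smul_le (hu.smul (-1)) (-1)

end TraceClass

section SelfAdjointTraceClass

variable {H : Type*} [NormedAddCommGroup H] [InnerProductSpace ℂ H] [CompleteSpace H]

theorem exists_hasSum_of_mem_nuclearWeights {d : ℕ → H →L[ℂ] H} {σ : ℕ → ℝ}
    (hd : ∀ n, σ n ∈ nuclearWeights (d n)) (hσ : Summable σ) :
    ∃ v, HasSum d v ∧ ∑' n, σ n ∈ nuclearWeights v := by
  choose c e f hc he hf hcσ hcd using hd
  have hC : Summable fun p : ℕ × ℕ => c p.1 p.2 :=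
    (summable_prod_of_nonneg fun p => hc p.1 p.2).2
      ⟨fun n => (hcσ n).summable, by simpa only [fun n => (hcσ n).tsum_eq] using hσ⟩
  have hF : Summable fun p : ℕ × ℕ => c p.1 p.2 • rankOne (e p.1 p.2) (f p.1 p.2) :=
    hC.of_norm_bounded fun p => norm_smul_rankOne_le (hc p.1 p.2) (he p.1 p.2) (hf p.1 p.2)
  refine ⟨_, hF.hasSum.prod_fiberwise hcd, ?_⟩
  rw [(hC.hasSum.prod_fiberwise hcσ).tsum_eq]
  exact mem_nuclearWeights_of_equiv (Denumerable.eqv (ℕ × ℕ)) (fun p => hc p.1 p.2)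
    (fun p => he p.1 p.2) (fun p => hf p.1 p.2) hC.hasSum hF.hasSum

variable (H) in
def selfAdjointTraceClass : Submodule ℝ (H →L[ℂ] H) where
  carrier := {u | Gsa u}
  add_mem' hu hv := ⟨hu.1.add hv.1, hu.2.add hv.2⟩
  zero_mem' := ⟨isTraceClass_iff_nonempty.2 ⟨0, zero_mem_nuclearWeights⟩, .zero _⟩
  smul_mem' c _ hu := ⟨hu.1.smul c, .smul (star_trivial c) hu.2⟩

variable (H) in
/-- `𝔊₁ˢᵃ` with the trace norm: a type synonym, so that it does not inherit the operator norm
of `H →L[ℂ] H`. -/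
def TraceClassSA : Type _ := selfAdjointTraceClass H

namespace TraceClassSA

instance : AddCommGroup (TraceClassSA H) :=
  inferInstanceAs (AddCommGroup (selfAdjointTraceClass H))

instance : Module ℝ (TraceClassSA H) := inferInstanceAs (Module ℝ (selfAdjointTraceClass H))

def mk (u : H →L[ℂ] H) (hu : Gsa u) : TraceClassSA H := ⟨u, hu⟩

@[simp] theorem val_mk (u : H →L[ℂ] H) (hu : Gsa u) : (mk u hu).val = u := rfl

theorem gsa (u : TraceClassSA H) : Gsa u.val := u.2

@[ext] theorem ext {u v : TraceClassSA H} (h : u.val = v.val) : u = v := Subtype.ext h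

@[simp] theorem val_add (u v : TraceClassSA H) : (u + v).val = u.val + v.val := rfl
@[simp] theorem val_sub (u v : TraceClassSA H) : (u - v).val = u.val - v.val := rfl
@[simp] theorem val_smul (a : ℝ) (u : TraceClassSA H) : (a • u).val = a • u.val := rfl
@[simp] theorem val_sum (s : Finset ℕ) (u : ℕ → TraceClassSA H) :
    (∑ i ∈ s, u i).val = ∑ i ∈ s, (u i).val :=
  map_sum (selfAdjointTraceClass H).subtype u s

instance : NormedAddCommGroup (TraceClassSA H) :=
  AddGroupNorm.toNormedAddCommGroup
    { toFun := fun u => traceNorm u.val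
      map_zero' := le_antisymm (traceNorm_le_of_mem zero_mem_nuclearWeights) (traceNorm_nonneg _)
      add_le' := fun u v => traceNorm_add_le u.gsa.1 v.gsa.1
      neg' := fun u => traceNorm_neg u.gsa.1
      eq_zero_of_map_eq_zero' := fun u hu => ext <| norm_le_zero_iff.1 <|
        (norm_le_traceNorm u.gsa.1).trans_eq hu }

theorem norm_def (u : TraceClassSA H) : ‖u‖ = traceNorm u.val := rfl

instance : NormedSpace ℝ (TraceClassSA H) :=
  ⟨fun a u => traceNorm_smul_le u.gsa.1 a⟩

instance : CompleteSpace (TraceClassSA H) := by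
  refine NormedAddCommGroup.completeSpace_of_summable_imp_tendsto fun w hw => ?_
  have hσ : ∀ n, ∃ s ∈ nuclearWeights (w n).val, s < ‖w n‖ + (1 / 2) ^ n := fun n =>
    exists_mem_nuclearWeights_lt (w n).gsa.1 (by positivity)
  choose σ hσw hσlt using hσ
  have hσs : Summable σ :=
    (hw.add (summable_geometric_two)).of_nonneg_of_le
      (fun n => nonneg_of_mem_nuclearWeights (hσw n)) fun n => (hσlt n).le
  obtain ⟨v, hv, hvw⟩ := exists_hasSum_of_mem_nuclearWeights hσw hσs
  have hsa : IsSelfAdjoint v := by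
    have hstar : (fun n => star (w n).val) = fun n => (w n).val := funext fun n => (w n).gsa.2
    exact (hstar ▸ hv.star).unique hv
  have hgsa : Gsa v := ⟨isTraceClass_iff_nonempty.2 ⟨_, hvw⟩, hsa⟩
  refine ⟨mk v hgsa, tendsto_iff_norm_sub_tendsto_zero.2 ?_⟩
  have htail : ∀ N, ‖∑ i ∈ Finset.range N, w i - mk v hgsa‖ ≤ ∑' n, σ (n + N) := by
    intro N
    obtain ⟨v', hv', hv'w⟩ := exists_hasSum_of_mem_nuclearWeights (fun n => hσw (n + N))
      ((summable_nat_add_iff N).2 hσs)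
    rw [norm_def, val_sub, val_sum, val_mk, ← neg_sub, (hasSum_nat_add_iff' N).2 hv |>.unique hv',
      traceNorm_neg]
    · exact traceNorm_le_of_mem hv'w
    · exact isTraceClass_iff_nonempty.2 ⟨_, hv'w⟩
  exact squeeze_zero (fun _ => norm_nonneg _) htail (tendsto_sum_nat_add σ)

def quadForm (x : H) : TraceClassSA H →L[ℝ] ℝ :=
  LinearMap.mkContinuous
    { toFun := fun u => u.val.reApplyInnerSelf x
      map_add' := fun u v => by
        simp [ContinuousLinearMap.reApplyInnerSelf_apply, inner_add_left]
      map_smul' := fun a u => by simp [ContinuousLinearMap.reApplyInnerSelf_apply] }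
    (‖x‖ * ‖x‖) fun u => by
      show |u.val.reApplyInnerSelf x| ≤ _
      rw [ContinuousLinearMap.reApplyInnerSelf_apply, norm_def]
      calc _ ≤ ‖inner ℂ (u.val x) x‖ := Complex.abs_re_le_norm _
        _ ≤ ‖u.val‖ * ‖x‖ * ‖x‖ :=
          (norm_inner_le_norm _ _).trans (by gcongr; exact u.val.le_opNorm x)
        _ ≤ traceNorm u.val * ‖x‖ * ‖x‖ := by gcongr; exact norm_le_traceNorm u.gsa.1
        _ = _ := by ring

theorem posOp_iff_mem_posCone (u : TraceClassSA H) : PosOp u.val ↔ u ∈ posCone quadForm :=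
  (posOp_iff_isPositive _).trans <|
    ContinuousLinearMap.isPositive_def'.trans (and_iff_right u.gsa.2)

end TraceClassSA

open TraceClassSA

section Semigroups

variable {S : ℝ → (H →L[ℂ] H) → (H →L[ℂ] H)}

def IsC0Semigroup.extend (hS : IsC0Semigroup S) (hSb : IsBoundedSG S) (t : ℝ) :
    TraceClassSA H →L[ℝ] TraceClassSA H :=
  if ht : 0 < t then
    LinearMap.mkContinuous
      { toFun := fun u => TraceClassSA.mk (S t u.val) ((hS.lin t ht).maps _ u.gsa)
        map_add' := fun u v => ext ((hS.lin t ht).map_add _ u.gsa _ v.gsa)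
        map_smul' := fun a u => ext ((hS.lin t ht).map_smul a _ u.gsa) }
      (max hSb.choose 1) fun u =>
        (hSb.choose_spec t ht _ u.gsa).trans
          (mul_le_mul_of_nonneg_right (le_max_left _ _) (traceNorm_nonneg _))
  else 1

namespace IsC0Semigroup

variable (hS : IsC0Semigroup S) (hSb : IsBoundedSG S)

theorem extend_of_nonpos {t : ℝ} (ht : ¬0 < t) : hS.extend hSb t = 1 := dif_neg ht

theorem extend_apply_of_pos {t : ℝ} (ht : 0 < t) (u : TraceClassSA H) :
    (hS.extend hSb t u).val = S t u.val := by
  rw [extend, dif_pos ht]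
  rfl

def toBounded : BoundedC0Semigroup (TraceClassSA H) where
  toFun := hS.extend hSb
  eq_one_of_nonpos _ ht := hS.extend_of_nonpos hSb ht.not_gt
  add_apply s t u hs ht := by
    rcases hs.eq_or_lt with rfl | hs
    · simp [hS.extend_of_nonpos hSb (lt_irrefl 0)]
    rcases ht.eq_or_lt with rfl | ht
    · simp [hS.extend_of_nonpos hSb (lt_irrefl 0)]
    ext1
    simp only [hS.extend_apply_of_pos hSb, hs, ht, add_pos]
    exact hS.comp s t hs ht _ u.gsa
  bound := max hSb.choose 1
  norm_le t := by
    by_cases ht : 0 < t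
    · rw [extend, dif_pos ht]
      exact LinearMap.mkContinuous_norm_le _ (le_max_of_le_right zero_le_one) _
    · rw [hS.extend_of_nonpos hSb ht]
      exact ContinuousLinearMap.norm_id_le.trans (le_max_right _ _)
  tendsto_nhdsGT u := by
    refine tendsto_iff_norm_sub_tendsto_zero.2 ((hS.strong _ u.gsa).congr' ?_)
    filter_upwards [self_mem_nhdsWithin] with t (ht : 0 < t)
    rw [norm_def, val_sub, hS.extend_apply_of_pos hSb ht]

theorem toBounded_apply_of_pos {t : ℝ} (ht : 0 < t) (u : TraceClassSA H) :
    (hS.toBounded hSb t u).val = S t u.val :=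
  hS.extend_apply_of_pos hSb ht u

theorem mapsTo_posCone (hSp : IsPosPresSG S) (t : ℝ) :
    MapsTo (hS.toBounded hSb t) (posCone quadForm) (posCone quadForm) := fun u hu => by
  by_cases ht : 0 < t
  · rw [← posOp_iff_mem_posCone, hS.toBounded_apply_of_pos hSb ht]
    exact hSp t ht _ ⟨u.gsa.1, (posOp_iff_mem_posCone u).2 hu⟩
  · rwa [(hS.toBounded hSb).apply_of_nonpos (not_lt.1 ht)]

theorem forall_posOp_sub_iff {T : ℝ → (H →L[ℂ] H) → (H →L[ℂ] H)} (hT : IsC0Semigroup T)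
    (hTb : IsBoundedSG T) :
    (∀ t : ℝ, 0 < t → ∀ u, Gpos u → PosOp (T t u - S t u)) ↔
      ∀ t, 0 < t → ∀ u ∈ posCone quadForm,
        hT.toBounded hTb t u - hS.toBounded hSb t u ∈ posCone quadForm := by
  refine forall₂_congr fun t ht => ⟨fun h u hu => ?_, fun h u hu => ?_⟩
  · rw [← posOp_iff_mem_posCone, val_sub, hS.toBounded_apply_of_pos hSb ht,
      hT.toBounded_apply_of_pos hTb ht]
    exact h _ ⟨u.gsa.1, (posOp_iff_mem_posCone u).2 hu⟩
  · have := h (TraceClassSA.mk u ⟨hu.1, ((posOp_iff_isPositive u).1 hu.2).isSelfAdjoint⟩)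
      ((posOp_iff_mem_posCone _).1 hu.2)
    rwa [← posOp_iff_mem_posCone, val_sub, hS.toBounded_apply_of_pos hSb ht,
      hT.toBounded_apply_of_pos hTb ht] at this

end IsC0Semigroup

namespace GeneratesNeg

variable {D : Set (H →L[ℂ] H)} {A : (H →L[ℂ] H) → (H →L[ℂ] H)}

theorem hasNegGen_iff (hS : IsC0Semigroup S) (hSb : IsBoundedSG S) (hgen : GeneratesNeg S D A)
    {u v : TraceClassSA H} :
    (hS.toBounded hSb).HasNegGen u v ↔ u.val ∈ D ∧ A u.val = v.val := by
  have key : ∀ w : TraceClassSA H, (hS.toBounded hSb).HasNegGen u w ↔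
      Tendsto (fun t : ℝ => traceNorm (t⁻¹ • (u.val - S t u.val) - w.val)) (𝓝[>] 0) (𝓝 0) := by
    intro w
    rw [BoundedC0Semigroup.HasNegGen, tendsto_iff_norm_sub_tendsto_zero]
    refine tendsto_congr' ?_
    filter_upwards [self_mem_nhdsWithin] with t (ht : 0 < t)
    rw [norm_def, val_sub, val_smul, val_sub, hS.toBounded_apply_of_pos hSb ht]
  constructor
  · intro h
    have hu : u.val ∈ D := hgen.max _ u.gsa _ v.gsa ((key v).1 h)
    have hA := (key (TraceClassSA.mk _ (hgen.lin.maps _ hu))).2 (hgen.deriv _ hu)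
    exact ⟨hu, by rw [← tendsto_nhds_unique hA h, val_mk]⟩
  · rintro ⟨hu, hA⟩
    exact (key v).2 (hA ▸ hgen.deriv _ hu)

end GeneratesNeg

variable {T : ℝ → (H →L[ℂ] H) → (H →L[ℂ] H)} {DH DL : Set (H →L[ℂ] H)}
  {Hop Lop : (H →L[ℂ] H) → (H →L[ℂ] H)}

theorem forall_posOp_generator_sub_iff
    (hS : IsC0Semigroup S) (hSb : IsBoundedSG S) (hT : IsC0Semigroup T) (hTb : IsBoundedSG T)
    (hgenH : GeneratesNeg S DH Hop) (hgenL : GeneratesNeg T DL Lop) (hDsub : DH ⊆ DL) :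
    (∀ u ∈ DH, PosOp u → PosOp (Hop u - Lop u)) ↔
      ∀ x y z, x ∈ posCone quadForm → (hS.toBounded hSb).HasNegGen x y →
        (hT.toBounded hTb).HasNegGen x z → y - z ∈ posCone quadForm := by
  constructor
  · intro h x y z hx hy hz
    rw [hgenH.hasNegGen_iff hS hSb] at hy
    rw [hgenL.hasNegGen_iff hT hTb] at hz
    rw [← posOp_iff_mem_posCone, val_sub, ← hy.2, ← hz.2]
    exact h _ hy.1 ((posOp_iff_mem_posCone x).2 hx)
  · intro h u hu hpos
    have hu' := hgenH.dom.subset u hu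
    have := h (TraceClassSA.mk u hu') (TraceClassSA.mk _ (hgenH.lin.maps u hu))
      (TraceClassSA.mk _ (hgenL.lin.maps u (hDsub hu))) ((posOp_iff_mem_posCone _).1 hpos)
      ((hgenH.hasNegGen_iff hS hSb).2 ⟨hu, rfl⟩) ((hgenL.hasNegGen_iff hT hTb).2 ⟨hDsub hu, rfl⟩)
    rwa [← posOp_iff_mem_posCone] at this

theorem exists_hasNegGen_of_subset
    (hS : IsC0Semigroup S) (hSb : IsBoundedSG S) (hT : IsC0Semigroup T) (hTb : IsBoundedSG T)
    (hgenH : GeneratesNeg S DH Hop) (hgenL : GeneratesNeg T DL Lop) (hDsub : DH ⊆ DL)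
    (x y : TraceClassSA H) (h : (hS.toBounded hSb).HasNegGen x y) :
    ∃ z, (hT.toBounded hTb).HasNegGen x z := by
  have hx := hDsub ((hgenH.hasNegGen_iff hS hSb).1 h).1
  exact ⟨TraceClassSA.mk _ (hgenL.lin.maps _ hx), (hgenL.hasNegGen_iff hT hTb).2 ⟨hx, rfl⟩⟩

end Semigroups

/-- Lemma 2.3, (i) ⇔ (iii). For two positivity preserving bounded
`C₀`-semigroups `S, T` with generators `-Hop`, `-Lop` and `D(H) ⊆ D(L)`, one has
`S_t ≤ T_t` for all `t > 0` if and only if `Hop - Lop` (on `D(H)`) is positivity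
preserving. -/
theorem statement_8 (S T : ℝ → (H →L[ℂ] H) → (H →L[ℂ] H))
    (DH DL : Set (H →L[ℂ] H)) (Hop Lop : (H →L[ℂ] H) → (H →L[ℂ] H))
    (hS : IsC0Semigroup S) (hSb : IsBoundedSG S) (hSp : IsPosPresSG S)
    (hT : IsC0Semigroup T) (hTb : IsBoundedSG T) (hTp : IsPosPresSG T)
    (hgenH : GeneratesNeg S DH Hop) (hgenL : GeneratesNeg T DL Lop)
    (hDsub : DH ⊆ DL) :
    (∀ t : ℝ, 0 < t → ∀ u, Gpos u → PosOp (T t u - S t u)) ↔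
    (∀ u ∈ DH, PosOp u → PosOp (Hop u - Lop u)) := by
  rw [hS.forall_posOp_sub_iff hSb hT hTb,
    forall_posOp_generator_sub_iff hS hSb hT hTb hgenH hgenL hDsub]
  exact BoundedC0Semigroup.sub_mem_posCone_iff (hS.mapsTo_posCone hSb hSp)
    (hT.mapsTo_posCone hTb hTp) (exists_hasNegGen_of_subset hS hSb hT hTb hgenH hgenL hDsub)
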